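/- Let n ≥ 2 and p > 1, and let f : ℝⁿ → R̄ⁿ be any map. Let A_1, A_2 ∈ R̄ⁿ with A_1 ≠ A_2, and suppose there are sequences (a_k) and (b_k) in ℝⁿ with a_k ≠ 0, f(a_k) = A_1, f(b_k) = A_2, |a_k| → ∞, and |a_k − b_k| / |a_k|^{2−p} → 0. Then no subsequence of the family of maps x ↦ f(a_k + |a_k|^{2−p} x) converges uniformly with respect to the chordal distance q on any neighborhood of the origin to a map that is continuous at 0; in particular this family is not normal in any neighborhood of the origin. -/

import Mathlib

open Filter Topology Set
open scoped ENNReal NNReal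

noncomputable section

/-- `E n` is the Euclidean space `ℝⁿ`. -/
abbrev E (n : ℕ) := EuclideanSpace ℝ (Fin n)

/-- `RS n` is the one-point compactification `R̄ⁿ = ℝⁿ ∪ {∞}`, with `none` playing
the role of the point `∞`. -/
abbrev RS (n : ℕ) := Option (E n)

/-- The chordal (spherical) distance `q` on `R̄ⁿ`. -/
noncomputable def chordal {n : ℕ} : RS n → RS n → ℝ
  | some a, some b => ‖a - b‖ / (Real.sqrt (1 + ‖a‖ ^ 2) * Real.sqrt (1 + ‖b‖ ^ 2))
  | some a, none => 1 / Real.sqrt (1 + ‖a‖ ^ 2)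
  | none, some b => 1 / Real.sqrt (1 + ‖b‖ ^ 2)
  | none, none => 0

/-- The chordal diameter of a subset of `R̄ⁿ`. -/
noncomputable def qdiam {n : ℕ} (S : Set (RS n)) : ℝ :=
  sSup {d | ∃ a ∈ S, ∃ b ∈ S, d = chordal a b}

/-- The weighted ball `B_p(a, r) = {x : |x - a| < r |a|^(2-p)}`. -/
def Bp {n : ℕ} (p : ℝ) (a : E n) (r : ℝ) : Set (E n) :=
  {x | ‖x - a‖ < r * ‖a‖ ^ (2 - p)}

/-- `Qq α g x = limsup_{h → 0, h ≠ 0} q(g(x+h), g(x)) / |h|^α ∈ [0,∞]`. -/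
noncomputable def Qq {n : ℕ} (α : ℝ) (g : E n → RS n) (x : E n) : ℝ≥0∞ :=
  Filter.limsup (fun h : E n => ENNReal.ofReal (chordal (g (x + h)) (g x) / ‖h‖ ^ α))
    (𝓝[≠] (0 : E n))

/-- `(x_m)` is an `M_p`-sequence for `f` with parameter `l`:  `x_m ∈ ℝⁿ \ {0}`,
`|x_m| → ∞`, and for every subsequence and every `δ > 0` the set of values
`c ∈ R̄ⁿ` attained only finitely often by `f` in `⋃_k B_p(x_{m_k}, δ)` has at
most `l` elements. -/
def MpSeq {n : ℕ} (p : ℝ) (l : ℕ) (f : E n → RS n) (x : ℕ → E n) : Prop :=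
  (∀ m, x m ≠ 0) ∧ Tendsto (fun m => ‖x m‖) atTop atTop ∧
    ∀ φ : ℕ → ℕ, StrictMono φ → ∀ δ : ℝ, 0 < δ →
      {c : RS n | (f ⁻¹' {c} ∩ ⋃ k, Bp p (x (φ k)) δ).Finite}.Finite ∧
      {c : RS n | (f ⁻¹' {c} ∩ ⋃ k, Bp p (x (φ k)) δ).Finite}.ncard ≤ l

/-- `(x_m)` is a `μ_p`-sequence for `f` with parameter `l`: `x_m ∈ ℝⁿ \ {0}`,
`|x_m| → ∞`, and there are monotone decreasing null sequences `(L_m)`, `(r_m)` of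
positive numbers such that `f(B_p(x_m, r_m))` covers `R̄ⁿ` except possibly `l`
sets of chordal diameter at most `L_m`. -/
def MuSeq {n : ℕ} (p : ℝ) (l : ℕ) (f : E n → RS n) (x : ℕ → E n) : Prop :=
  (∀ m, x m ≠ 0) ∧ Tendsto (fun m => ‖x m‖) atTop atTop ∧
    ∃ L r : ℕ → ℝ, (∀ m, 0 < L m) ∧ (∀ m, 0 < r m) ∧ Antitone L ∧ Antitone r ∧
      Tendsto L atTop (𝓝 0) ∧ Tendsto r atTop (𝓝 0) ∧
      ∀ m, ∃ Es : Fin l → Set (RS n), (∀ j, qdiam (Es j) ≤ L m) ∧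
        ∀ c : RS n, c ∉ ⋃ j, Es j → c ∈ f '' Bp p (x m) (r m)

/-- Continuity of `g : ℝⁿ → R̄ⁿ` at a point, with respect to the chordal distance. -/
def QContinuousAt {n : ℕ} (g : E n → RS n) (x₀ : E n) : Prop :=
  ∀ ε : ℝ, 0 < ε → ∃ δ : ℝ, 0 < δ ∧ ∀ z : E n, ‖z - x₀‖ < δ → chordal (g z) (g x₀) < ε


/-! The rescaled maps `F k x = f (a k + |a k|^(2-p) x)` take the value `A₁` at `0` and the value
`A₂` at `z k = (b k - a k) / |a k|^(2-p)`, and `z k → 0`. If `F ∘ φ` converged uniformly near `0`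
to a map `g` continuous at `0`, both `F (φ k) 0` and `F (φ k) (z (φ k))` would tend to `g 0` in
the chordal distance, forcing `A₁ = A₂`. That `q` satisfies the triangle inequality is seen by
realising it as the Euclidean distance on the Riemann sphere. -/

/-- Inverse stereographic projection of `R̄ⁿ` onto the sphere of radius `1/2` centred at
`(0, 1/2) ∈ ℝⁿ × ℝ`; the chordal distance is the Euclidean distance between images. -/
def sphereEmbedding {n : ℕ} : RS n → WithLp 2 (E n × ℝ)
  | some a => WithLp.toLp 2 ((1 + ‖a‖ ^ 2)⁻¹ • a, ‖a‖ ^ 2 / (1 + ‖a‖ ^ 2))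
  | none => WithLp.toLp 2 (0, 1)

section Chordal

variable {n : ℕ}

lemma chordal_nonneg (x y : RS n) : 0 ≤ chordal x y := by
  cases x <;> cases y <;> simp only [chordal] <;> positivity

lemma chordal_some_none_sq (a : E n) :
    chordal (some a) none ^ 2 = dist (sphereEmbedding (some a)) (sphereEmbedding none) ^ 2 := by
  have ha : 0 < 1 + ‖a‖ ^ 2 := by positivity
  rw [WithLp.prod_dist_eq_of_L2, Real.sq_sqrt (by positivity)]
  simp only [chordal, sphereEmbedding, WithLp.toLp_fst, WithLp.toLp_snd, dist_zero_right,
    norm_smul, norm_inv, Real.dist_eq, Real.norm_eq_abs, abs_of_pos ha, sq_abs, div_pow, one_pow,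
    Real.sq_sqrt ha.le]
  field_simp
  ring

lemma chordal_some_some_sq (a b : E n) :
    chordal (some a) (some b) ^ 2
      = dist (sphereEmbedding (some a)) (sphereEmbedding (some b)) ^ 2 := by
  have ha : 0 < 1 + ‖a‖ ^ 2 := by positivity
  have hb : 0 < 1 + ‖b‖ ^ 2 := by positivity
  rw [WithLp.prod_dist_eq_of_L2, Real.sq_sqrt (by positivity)]
  simp only [chordal, sphereEmbedding, WithLp.toLp_fst, WithLp.toLp_snd, dist_eq_norm, div_pow,
    mul_pow, Real.sq_sqrt ha.le, Real.sq_sqrt hb.le, Real.norm_eq_abs, sq_abs, norm_sub_sq_real,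
    real_inner_smul_left, real_inner_smul_right, norm_smul, norm_inv, abs_of_pos ha, abs_of_pos hb]
  field_simp
  ring

lemma chordal_eq_dist_sphereEmbedding (x y : RS n) :
    chordal x y = dist (sphereEmbedding x) (sphereEmbedding y) := by
  refine (sq_eq_sq₀ (chordal_nonneg x y) dist_nonneg).mp ?_
  rcases x with _ | a <;> rcases y with _ | b
  · simp [chordal, sphereEmbedding]
  · rw [dist_comm, ← chordal_some_none_sq]; rfl
  · exact chordal_some_none_sq a
  · exact chordal_some_some_sq a b

lemma chordal_comm (x y : RS n) : chordal x y = chordal y x := by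
  simp only [chordal_eq_dist_sphereEmbedding, dist_comm]

lemma chordal_triangle (x y z : RS n) : chordal x z ≤ chordal x y + chordal y z := by
  simp only [chordal_eq_dist_sphereEmbedding]
  exact dist_triangle _ _ _

lemma chordal_pos_of_ne {x y : RS n} (h : x ≠ y) : 0 < chordal x y := by
  rcases x with _ | a <;> rcases y with _ | b
  · exact absurd rfl h
  all_goals simp only [chordal]
  · positivity
  · positivity
  · have hab : a - b ≠ 0 := sub_ne_zero.mpr fun hab => h (congrArg some hab)
    positivity

end Chordal

section UniformLimit

variable {n : ℕ}

def ChordalTendstoUniformlyOn (F : ℕ → E n → RS n) (g : E n → RS n) (s : Set (E n)) : Prop :=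
  ∀ ε : ℝ, 0 < ε → ∃ N : ℕ, ∀ k ≥ N, ∀ z ∈ s, chordal (F k z) (g z) < ε

lemma ChordalTendstoUniformlyOn.eventually_chordal_apply_lt {F : ℕ → E n → RS n}
    {g : E n → RS n} {s : Set (E n)} {x₀ : E n} (hF : ChordalTendstoUniformlyOn F g s)
    (hs : s ∈ 𝓝 x₀) (hg : QContinuousAt g x₀) {z : ℕ → E n} (hz : Tendsto z atTop (𝓝 x₀))
    {ε : ℝ} (hε : 0 < ε) : ∀ᶠ k in atTop, chordal (F k (z k)) (g x₀) < ε := by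
  obtain ⟨δ, hδ, hgδ⟩ := hg (ε / 2) (half_pos hε)
  obtain ⟨N, hN⟩ := hF (ε / 2) (half_pos hε)
  filter_upwards [hz.eventually (inter_mem hs (Metric.ball_mem_nhds x₀ hδ)),
    eventually_ge_atTop N] with k ⟨hzs, hzδ⟩ hk
  calc chordal (F k (z k)) (g x₀) ≤ chordal (F k (z k)) (g (z k)) + chordal (g (z k)) (g x₀) :=
        chordal_triangle _ _ _
    _ < ε / 2 + ε / 2 := add_lt_add (hN k hk _ hzs) (hgδ _ (mem_ball_iff_norm.mp hzδ))
    _ = ε := add_halves ε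

lemma ChordalTendstoUniformlyOn.eq_of_tendsto {F : ℕ → E n → RS n} {g : E n → RS n}
    {s : Set (E n)} {x₀ : E n} (hF : ChordalTendstoUniformlyOn F g s) (hs : s ∈ 𝓝 x₀)
    (hg : QContinuousAt g x₀) {z : ℕ → E n} (hz : Tendsto z atTop (𝓝 x₀)) {A₁ A₂ : RS n}
    (h₁ : ∀ k, F k x₀ = A₁) (h₂ : ∀ k, F k (z k) = A₂) : A₁ = A₂ := by
  by_contra hA
  have hd : 0 < chordal A₁ A₂ / 2 := half_pos (chordal_pos_of_ne hA)
  obtain ⟨k, hk₁, hk₂⟩ := ((hF.eventually_chordal_apply_lt hs hg tendsto_const_nhds hd).and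
    (hF.eventually_chordal_apply_lt hs hg hz hd)).exists
  rw [h₁] at hk₁
  rw [h₂, chordal_comm] at hk₂
  linarith [chordal_triangle A₁ (g x₀) A₂]

end UniformLimit

theorem stmt_10_general (n : ℕ) (p : ℝ)
    (f : E n → RS n) (A₁ A₂ : RS n) (hA : A₁ ≠ A₂)
    (a b : ℕ → E n) (ha0 : ∀ k, a k ≠ 0)
    (hfa : ∀ k, f (a k) = A₁) (hfb : ∀ k, f (b k) = A₂)
    (hclose : Tendsto (fun k => ‖a k - b k‖ / ‖a k‖ ^ (2 - p)) atTop (𝓝 0)) :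
    ∀ φ : ℕ → ℕ, StrictMono φ → ∀ r : ℝ, 0 < r → ∀ g : E n → RS n, QContinuousAt g 0 →
      ¬ (∀ ε : ℝ, 0 < ε → ∃ N : ℕ, ∀ k ≥ N, ∀ z : E n, ‖z‖ ≤ r →
          chordal (f (a (φ k) + ‖a (φ k)‖ ^ (2 - p) • z)) (g z) < ε) := by
  intro φ hφ r hr g hg hconv
  set c : ℕ → ℝ := fun k => ‖a (φ k)‖ ^ (2 - p)
  have hc : ∀ k, c k ≠ 0 := fun k => (Real.rpow_pos_of_pos (norm_pos_iff.mpr (ha0 _)) _).ne'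
  set z : ℕ → E n := fun k => (c k)⁻¹ • (b (φ k) - a (φ k))
  have hz : Tendsto z atTop (𝓝 0) := by
    refine tendsto_zero_iff_norm_tendsto_zero.mpr ((hclose.comp hφ.tendsto_atTop).congr fun k => ?_)
    simp only [z, Function.comp, norm_smul, norm_inv, Real.norm_eq_abs, abs_of_nonneg
      (Real.rpow_nonneg (norm_nonneg _) _), norm_sub_rev, c, inv_mul_eq_div]
  have hF : ChordalTendstoUniformlyOn (fun k z => f (a (φ k) + c k • z)) g
      (Metric.closedBall 0 r) :=
    fun ε hε => (hconv ε hε).imp fun N hN k hk z hz => hN k hk z (mem_closedBall_zero_iff.mp hz)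
  refine hA (hF.eq_of_tendsto (Metric.closedBall_mem_nhds 0 hr) hg hz (fun k => ?_) fun k => ?_)
  · simpa using hfa (φ k)
  · simpa [z, smul_inv_smul₀ (hc k)] using hfb (φ k)

/-- If `f(a_k) = A₁`, `f(b_k) = A₂` with `A₁ ≠ A₂`, `a_k ≠ 0`,
`|a_k| → ∞` and `|a_k - b_k| / |a_k|^(2-p) → 0`, then no subsequence of the maps
`x ↦ f(a_k + |a_k|^(2-p) x)` converges uniformly (w.r.t. the chordal distance) on any
closed ball around the origin to a map continuous at `0`. -/
theorem stmt_10 (n : ℕ) (hn : 2 ≤ n) (p : ℝ) (hp : 1 < p)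
    (f : E n → RS n) (A₁ A₂ : RS n) (hA : A₁ ≠ A₂)
    (a b : ℕ → E n) (ha0 : ∀ k, a k ≠ 0)
    (hfa : ∀ k, f (a k) = A₁) (hfb : ∀ k, f (b k) = A₂)
    (ha : Tendsto (fun k => ‖a k‖) atTop atTop)
    (hclose : Tendsto (fun k => ‖a k - b k‖ / ‖a k‖ ^ (2 - p)) atTop (𝓝 0)) :
    ∀ φ : ℕ → ℕ, StrictMono φ → ∀ r : ℝ, 0 < r → ∀ g : E n → RS n, QContinuousAt g 0 →
      ¬ (∀ ε : ℝ, 0 < ε → ∃ N : ℕ, ∀ k ≥ N, ∀ z : E n, ‖z‖ ≤ r →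
          chordal (f (a (φ k) + ‖a (φ k)‖ ^ (2 - p) • z)) (g z) < ε) :=
  stmt_10_general n p f A₁ A₂ hA a b ha0 hfa hfb hclose
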